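/- arXiv:math/0612457 — 2 statements merged into one kernel-verified Lean document; each statement's English description precedes it below -/
import Mathlib

section
/- Double mean value theorem: Let I ⊆ ℝ be an interval and let φ : ℝ → ℝ be twice continuously differentiable. If ξ₁, ξ₂, ξ₃, ξ₄ ∈ I satisfy ξ₁ − ξ₂ + ξ₃ − ξ₄ = 0, then |φ(ξ₁) − φ(ξ₂) + φ(ξ₃) − φ(ξ₄)| ≤ |2(ξ₁−ξ₂)(ξ₁−ξ₄)| · sup_{y∈I} |φ''(y)|. -/
/-- **Double mean value theorem.**  Let `I ⊆ ℝ` be an interval and `φ : ℝ → ℝ` twice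
continuously differentiable.  If `ξ₁, ξ₂, ξ₃, ξ₄ ∈ I` satisfy `ξ₁ - ξ₂ + ξ₃ - ξ₄ = 0`,
then `|φ ξ₁ - φ ξ₂ + φ ξ₃ - φ ξ₄| ≤ |2(ξ₁-ξ₂)(ξ₁-ξ₄)| * sup_{y ∈ I} |φ''(y)|`
(formulated via an arbitrary upper bound `M` for `|φ''|` on `I`). -/
theorem double_mean_value_theorem (I : Set ℝ) (hI : I.OrdConnected)
    (φ : ℝ → ℝ) (hφ : ContDiff ℝ 2 φ)
    (ξ₁ ξ₂ ξ₃ ξ₄ : ℝ) (h1 : ξ₁ ∈ I) (h2 : ξ₂ ∈ I) (h3 : ξ₃ ∈ I) (h4 : ξ₄ ∈ I)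
    (hsum : ξ₁ - ξ₂ + ξ₃ - ξ₄ = 0)
    (M : ℝ) (hM : ∀ y ∈ I, |iteratedDeriv 2 φ y| ≤ M) :
    |φ ξ₁ - φ ξ₂ + φ ξ₃ - φ ξ₄| ≤ |2 * (ξ₁ - ξ₂) * (ξ₁ - ξ₄)| * M := by
  have h2it : iteratedDeriv 2 φ = deriv (deriv φ) := by
    rw [show (2:ℕ) = 1+1 from rfl, iteratedDeriv_succ, iteratedDeriv_one]
  have hM' : ∀ y ∈ I, |deriv (deriv φ) y| ≤ M := by
    intro y hy; rw [← h2it]; exact hM y hy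
  have hMnonneg : 0 ≤ M := le_trans (abs_nonneg _) (hM ξ₁ h1)
  have hφ' : ContDiff ℝ 1 (deriv φ) := by
    have := (contDiff_succ_iff_deriv (n := 1)).mp (by exact_mod_cast hφ)
    exact this.2.2
  have hdφ : Differentiable ℝ φ := hφ.differentiable (by norm_num)
  have hdφ' : Differentiable ℝ (deriv φ) := hφ'.differentiable (by norm_num)
  set a := ξ₁ - ξ₄ with ha
  -- inner bound: for x ∈ I with x+a ∈ I, |φ'(x+a) - φ'(x)| ≤ M * |a|
  have inner : ∀ x ∈ I, x + a ∈ I → |deriv φ (x + a) - deriv φ x| ≤ M * |a| := by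
    intro x hx hxa
    have hsub : Set.uIcc x (x + a) ⊆ I := hI.uIcc_subset hx hxa
    have := Convex.norm_image_sub_le_of_norm_hasDerivWithin_le
      (f := deriv φ) (f' := deriv (deriv φ)) (s := Set.uIcc x (x + a)) (C := M)
      (fun y hy => (hdφ' y).hasDerivAt.hasDerivWithinAt)
      (fun y hy => by rw [Real.norm_eq_abs]; exact hM' y (hsub hy))
      (convex_uIcc _ _) Set.left_mem_uIcc Set.right_mem_uIcc
    simpa [Real.norm_eq_abs, abs_sub_comm] using this
  -- ψ x = φ (x+a) - φ x
  set ψ : ℝ → ℝ := fun x => φ (x + a) - φ x with hψ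
  have hψderiv : ∀ x, HasDerivAt ψ (deriv φ (x + a) - deriv φ x) x := by
    intro x
    have h1' : HasDerivAt (fun x => φ (x + a)) (deriv φ (x + a)) x := by
      simpa [Function.comp_def] using (hdφ (x + a)).hasDerivAt.comp x ((hasDerivAt_id x).add_const a)
    exact h1'.sub (hdφ x).hasDerivAt
  have houter : |ψ ξ₄ - ψ ξ₃| ≤ (M * |a|) * |ξ₄ - ξ₃| := by
    have hsub : Set.uIcc ξ₃ ξ₄ ⊆ I := hI.uIcc_subset h3 h4
    have key := Convex.norm_image_sub_le_of_norm_hasDerivWithin_le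
      (f := ψ) (f' := fun x => deriv φ (x + a) - deriv φ x)
      (s := Set.uIcc ξ₃ ξ₄) (C := M * |a|)
      (fun y hy => (hψderiv y).hasDerivWithinAt)
      (fun y hy => by
        rw [Real.norm_eq_abs]
        refine inner y (hsub hy) ?_
        have hy' : y + a ∈ Set.uIcc (ξ₃ + a) (ξ₄ + a) := by
          rcases Set.mem_uIcc.mp hy with h | h
          · exact Set.mem_uIcc.mpr (Or.inl ⟨by linarith [h.1], by linarith [h.2]⟩)
          · exact Set.mem_uIcc.mpr (Or.inr ⟨by linarith [h.1], by linarith [h.2]⟩)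
        have h3a : ξ₃ + a = ξ₂ := by rw [ha]; linarith
        have h4a : ξ₄ + a = ξ₁ := by rw [ha]; ring
        rw [h3a, h4a] at hy'
        exact hI.uIcc_subset h2 h1 hy')
      (convex_uIcc _ _) Set.left_mem_uIcc Set.right_mem_uIcc
    simpa [Real.norm_eq_abs] using key
  have hψval : ψ ξ₄ - ψ ξ₃ = φ ξ₁ - φ ξ₂ + φ ξ₃ - φ ξ₄ := by
    have h3a : ξ₃ + a = ξ₂ := by rw [ha]; linarith
    have h4a : ξ₄ + a = ξ₁ := by rw [ha]; ring
    simp only [hψ, h3a, h4a]; ring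
  rw [← hψval]
  refine houter.trans ?_
  have h43 : |ξ₄ - ξ₃| = |ξ₁ - ξ₂| := by
    rw [show ξ₄ - ξ₃ = ξ₁ - ξ₂ by linarith]
  rw [h43, abs_mul, abs_mul]
  have : |(2:ℝ)| = 2 := by norm_num
  rw [this]
  nlinarith [mul_nonneg (mul_nonneg hMnonneg (abs_nonneg a)) (abs_nonneg (ξ₁ - ξ₂))]
end

section
/- Let L₁, L₂ : ℝ⁴ → ℝ be linear functionals such that the three linear functionals ξ ↦ ξ₁−ξ₂+ξ₃−ξ₄, L₁, L₂ on ℝ⁴ are linearly independent. Then there exists C < ∞, depending on L₁ and L₂, such that for all nonnegative measurable g₁, g₂, g₃, g₄ ∈ L²(ℝ) and all measurable sets E₁, E₂ ⊆ ℝ: ∫_Ξ ∏_{n=1}^4 g_n(ξ_n) · 1_{E₁}(L₁(ξ)) 1_{E₂}(L₂(ξ)) dλ(ξ) ≤ C |E₁|^{1/2} |E₂|^{1/2} ∏_{n=1}^4 ‖g_n‖_{L²(ℝ)}. -/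
open MeasureTheory ENNReal

noncomputable section

/-- The `L²(ℝ)` norm of a real-valued function, valued in `ℝ≥0∞`. -/
def l2norm (g : ℝ → ℝ) : ℝ≥0∞ := (∫⁻ x : ℝ, ENNReal.ofReal ((g x) ^ 2)) ^ ((1 : ℝ) / 2)

/-- The linear functional `ξ ↦ ξ₁ - ξ₂ + ξ₃ - ξ₄` on `ℝ⁴`. -/
def altSum : (Fin 4 → ℝ) →ₗ[ℝ] ℝ :=
  (LinearMap.proj (0 : Fin 4) : (Fin 4 → ℝ) →ₗ[ℝ] ℝ) - LinearMap.proj (1 : Fin 4)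
    + LinearMap.proj (2 : Fin 4) - LinearMap.proj (3 : Fin 4)




def e3 : (Fin 3 → ℝ) ≃ᵐ ℝ × (ℝ × ℝ) :=
  (MeasurableEquiv.piFinSuccAbove (fun _ : Fin 3 => ℝ) 0).trans
    ((MeasurableEquiv.refl ℝ).prodCongr (MeasurableEquiv.finTwoArrow))

lemma e3_mp : MeasurePreserving e3 volume volume :=
  (volume_preserving_piFinSuccAbove (fun _ : Fin 3 => ℝ) 0).trans
    ((MeasurePreserving.id volume).prod (volume_preserving_finTwoArrow ℝ))

lemma e3_symm_apply (x y z : ℝ) : e3.symm (x, (y, z)) = ![x, y, z] := by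
  funext i
  fin_cases i <;>
    simp [e3, MeasurableEquiv.piFinSuccAbove, MeasurableEquiv.finTwoArrow,
      MeasurableEquiv.piFinTwo, Fin.insertNthEquiv, MeasurableEquiv.prodCongr,
      MeasurableEquiv.refl, MeasurableEquiv.trans, MeasurableEquiv.symm,
      Equiv.prodCongr, piFinTwoEquiv, Fin.insertNth_zero] <;> rfl

lemma lintegral_triple (F : (Fin 3 → ℝ) → ℝ≥0∞) (hF : Measurable F) :
    ∫⁻ ξ : Fin 3 → ℝ, F ξ = ∫⁻ x : ℝ, ∫⁻ y : ℝ, ∫⁻ z : ℝ, F ![x, y, z] := by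
  have hmeas : Measurable (F ∘ e3.symm) := hF.comp e3.symm.measurable
  have h1 : ∫⁻ p : ℝ × (ℝ × ℝ), (F ∘ e3.symm) p = ∫⁻ ξ : Fin 3 → ℝ, F ξ := by
    rw [← e3_mp.lintegral_comp hmeas]; congr 1; funext ξ; simp
  rw [← h1, Measure.volume_eq_prod, lintegral_prod _ hmeas.aemeasurable]
  congr 1; funext x
  rw [Measure.volume_eq_prod,
    lintegral_prod (fun q : ℝ × ℝ => (F ∘ e3.symm) (x, q))
      ((hmeas.comp measurable_prodMk_left).aemeasurable)]
  simp only [Function.comp, e3_symm_apply]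

lemma meas_ind {α : Type*} [MeasurableSpace α] (E : Set ℝ) (hE : MeasurableSet E)
    {f : α → ℝ} (hf : Measurable f) :
    Measurable (fun ξ => E.indicator (fun _ => (1 : ℝ≥0∞)) (f ξ)) := by
  have : (fun ξ => E.indicator (fun _ => (1 : ℝ≥0∞)) (f ξ))
      = (f ⁻¹' E).indicator (fun _ => 1) := by
    funext ξ; by_cases h : f ξ ∈ E <;> simp [Set.indicator_apply, h]
  rw [this]; exact measurable_const.indicator (hf hE)

lemma lintegral_sep (u v : ℝ → ℝ≥0∞) (hu : Measurable u) (hv : Measurable v)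
    (E : Set ℝ) (hE : MeasurableSet E) :
    ∫⁻ ξ : Fin 3 → ℝ, u (ξ 0) * v (ξ 1) * E.indicator (fun _ => (1 : ℝ≥0∞)) (ξ 2)
      = (∫⁻ s : ℝ, u s) * (∫⁻ t : ℝ, v t) * volume E := by
  have hm : Measurable fun ξ : Fin 3 → ℝ =>
      u (ξ 0) * v (ξ 1) * E.indicator (fun _ => (1 : ℝ≥0∞)) (ξ 2) :=
    ((hu.comp (measurable_pi_apply 0)).mul (hv.comp (measurable_pi_apply 1))).mul
      (meas_ind E hE (measurable_pi_apply 2))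
  rw [lintegral_triple _ hm]
  simp only [Matrix.cons_val_zero, Matrix.cons_val_one, Matrix.head_cons,
    Matrix.cons_val_two, Matrix.tail_cons]
  have hind : Measurable fun z : ℝ => E.indicator (fun _ => (1 : ℝ≥0∞)) z :=
    meas_ind E hE measurable_id
  have h1 : ∀ x y : ℝ,
      ∫⁻ z : ℝ, u x * v y * E.indicator (fun _ => (1 : ℝ≥0∞)) z = u x * v y * volume E := by
    intro x y
    rw [lintegral_const_mul _ hind]
    congr 1
    exact lintegral_indicator_one hE
  simp only [h1]
  have h2 : ∀ x : ℝ, ∫⁻ y : ℝ, u x * v y * volume E = u x * (∫⁻ t, v t) * volume E := by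
    intro x
    rw [lintegral_mul_const _ (hv.const_mul _), lintegral_const_mul _ hv]
  simp only [h2]
  rw [lintegral_mul_const _ (hu.mul_const _), lintegral_mul_const _ hu]

def row3 (M : Matrix (Fin 3) (Fin 3) ℝ) (i : Fin 3) (ξ : Fin 3 → ℝ) : ℝ :=
  M i 0 * ξ 0 + M i 1 * ξ 1 + M i 2 * ξ 2

lemma row3_toLin' (M : Matrix (Fin 3) (Fin 3) ℝ) (i : Fin 3) (ξ : Fin 3 → ℝ) :
    row3 M i ξ = (Matrix.toLin' M) ξ i := by
  simp [row3, Matrix.toLin'_apply, Matrix.mulVec, dotProduct, Fin.sum_univ_three]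

lemma row3_meas (M : Matrix (Fin 3) (Fin 3) ℝ) (i : Fin 3) : Measurable (row3 M i) := by
  unfold row3; fun_prop

lemma master (u v : ℝ → ℝ) (hu : Measurable u) (hv : Measurable v)
    (E : Set ℝ) (hE : MeasurableSet E) (M : Matrix (Fin 3) (Fin 3) ℝ) (hM : M.det ≠ 0) :
    ∫⁻ ξ : Fin 3 → ℝ,
        ENNReal.ofReal (u (row3 M 0 ξ) ^ 2) * ENNReal.ofReal (v (row3 M 1 ξ) ^ 2) *
          E.indicator (fun _ => (1 : ℝ≥0∞)) (row3 M 2 ξ)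
      = ENNReal.ofReal |M.det|⁻¹ *
          ((∫⁻ s : ℝ, ENNReal.ofReal (u s ^ 2)) * (∫⁻ t : ℝ, ENNReal.ofReal (v t ^ 2)) *
            volume E) := by
  set T : (Fin 3 → ℝ) →ₗ[ℝ] (Fin 3 → ℝ) := Matrix.toLin' M with hT
  have hdet : LinearMap.det T = M.det := by rw [hT]; exact LinearMap.det_toLin' M
  have hTm : Measurable T := T.continuous_of_finiteDimensional.measurable
  set G : (Fin 3 → ℝ) → ℝ≥0∞ := fun η =>
    ENNReal.ofReal (u (η 0) ^ 2) * ENNReal.ofReal (v (η 1) ^ 2) *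
      E.indicator (fun _ => (1 : ℝ≥0∞)) (η 2) with hG
  have hGm : Measurable G := by
    refine Measurable.mul (Measurable.mul (f := fun η : Fin 3 → ℝ => ENNReal.ofReal (u (η 0) ^ 2))
      (g := fun η : Fin 3 → ℝ => ENNReal.ofReal (v (η 1) ^ 2)) ?_ ?_) (meas_ind E hE (measurable_pi_apply 2))
    · exact ENNReal.measurable_ofReal.comp ((hu.comp (measurable_pi_apply 0)).pow_const 2)
    · exact ENNReal.measurable_ofReal.comp ((hv.comp (measurable_pi_apply 1)).pow_const 2)
  have key : ∀ ξ : Fin 3 → ℝ,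
      ENNReal.ofReal (u (row3 M 0 ξ) ^ 2) * ENNReal.ofReal (v (row3 M 1 ξ) ^ 2) *
        E.indicator (fun _ => (1 : ℝ≥0∞)) (row3 M 2 ξ) = G (T ξ) := by
    intro ξ; simp only [hG, row3_toLin', hT]
  simp only [key]
  have hmap : Measure.map T volume = ENNReal.ofReal |(LinearMap.det T)⁻¹| • volume :=
    Measure.map_linearMap_addHaar_eq_smul_addHaar volume (by rw [hdet]; exact hM)
  have : ∫⁻ ξ, G (T ξ) = ∫⁻ η, G η ∂(Measure.map T volume) :=
    (lintegral_map hGm hTm).symm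
  rw [this, hmap, lintegral_smul_measure, hdet, abs_inv]
  congr 1
  exact lintegral_sep _ _
    (ENNReal.measurable_ofReal.comp (hu.pow_const 2))
    (ENNReal.measurable_ofReal.comp (hv.pow_const 2)) E hE

lemma myCS {α : Type*} [MeasurableSpace α] {μ : Measure α}
    (F₁ F₂ : α → ℝ≥0∞) (h₁ : Measurable F₁) (h₂ : Measurable F₂) :
    ∫⁻ a, F₁ a * F₂ a ∂μ
      ≤ (∫⁻ a, (F₁ a) ^ (2:ℝ) ∂μ) ^ ((1:ℝ)/2) * (∫⁻ a, (F₂ a) ^ (2:ℝ) ∂μ) ^ ((1:ℝ)/2) := by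
  have := ENNReal.lintegral_mul_le_Lp_mul_Lq μ (p := 2) (q := 2)
    ⟨by norm_num, by norm_num, by norm_num⟩ h₁.aemeasurable h₂.aemeasurable
  simpa using this

lemma ofReal_rpow_two (w : ℝ) (hw : 0 ≤ w) :
    (ENNReal.ofReal w) ^ (2:ℝ) = ENNReal.ofReal (w ^ 2) := by
  rw [show ((2:ℝ)) = ((2:ℕ):ℝ) by norm_num, ENNReal.rpow_natCast]
  rw [pow_two, pow_two, ← ENNReal.ofReal_mul hw]

lemma ind_rpow_two (s : Set ℝ) (t : ℝ) :
    (s.indicator (fun _ => (1:ℝ≥0∞)) t) ^ (2:ℝ) = s.indicator (fun _ => (1:ℝ≥0∞)) t := by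
  by_cases h : t ∈ s <;> simp [Set.indicator_apply, h]

lemma Fmeas (u v : ℝ → ℝ) (hu : Measurable u) (hv : Measurable v)
    (E : Set ℝ) (hE : MeasurableSet E) (M : Matrix (Fin 3) (Fin 3) ℝ) :
    Measurable (fun ξ : Fin 3 → ℝ =>
      ENNReal.ofReal (u (row3 M 0 ξ)) * ENNReal.ofReal (v (row3 M 1 ξ)) *
        E.indicator (fun _ => (1 : ℝ≥0∞)) (row3 M 2 ξ)) := by
  refine Measurable.mul (Measurable.mul (f := fun ξ : Fin 3 → ℝ => ENNReal.ofReal (u (row3 M 0 ξ)))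
    (g := fun ξ : Fin 3 → ℝ => ENNReal.ofReal (v (row3 M 1 ξ))) ?_ ?_) (meas_ind E hE (row3_meas M 2))
  · exact ENNReal.measurable_ofReal.comp (hu.comp (row3_meas M 0))
  · exact ENNReal.measurable_ofReal.comp (hv.comp (row3_meas M 1))

lemma sq_factor (u v : ℝ → ℝ) (hu : Measurable u) (hv : Measurable v)
    (nu : ∀ x, 0 ≤ u x) (nv : ∀ x, 0 ≤ v x)
    (E : Set ℝ) (hE : MeasurableSet E) (M : Matrix (Fin 3) (Fin 3) ℝ) (hM : M.det ≠ 0) :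
    (∫⁻ ξ : Fin 3 → ℝ,
        (ENNReal.ofReal (u (row3 M 0 ξ)) * ENNReal.ofReal (v (row3 M 1 ξ)) *
          E.indicator (fun _ => (1 : ℝ≥0∞)) (row3 M 2 ξ)) ^ (2:ℝ)) ^ ((1:ℝ)/2)
      = (ENNReal.ofReal |M.det|⁻¹) ^ ((1:ℝ)/2) * (volume E) ^ ((1:ℝ)/2) *
          (l2norm u * l2norm v) := by
  have hpt : ∀ ξ : Fin 3 → ℝ,
      (ENNReal.ofReal (u (row3 M 0 ξ)) * ENNReal.ofReal (v (row3 M 1 ξ)) *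
          E.indicator (fun _ => (1 : ℝ≥0∞)) (row3 M 2 ξ)) ^ (2:ℝ)
        = ENNReal.ofReal (u (row3 M 0 ξ) ^ 2) * ENNReal.ofReal (v (row3 M 1 ξ) ^ 2) *
            E.indicator (fun _ => (1 : ℝ≥0∞)) (row3 M 2 ξ) := by
    intro ξ
    rw [ENNReal.mul_rpow_of_nonneg _ _ (by norm_num : (0:ℝ) ≤ 2),
        ENNReal.mul_rpow_of_nonneg _ _ (by norm_num : (0:ℝ) ≤ 2),
        ofReal_rpow_two _ (nu _), ofReal_rpow_two _ (nv _), ind_rpow_two]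
  simp only [hpt]
  rw [master u v hu hv E hE M hM]
  rw [ENNReal.mul_rpow_of_nonneg _ _ (by norm_num : (0:ℝ) ≤ 1/2),
      ENNReal.mul_rpow_of_nonneg _ _ (by norm_num : (0:ℝ) ≤ 1/2),
      ENNReal.mul_rpow_of_nonneg _ _ (by norm_num : (0:ℝ) ≤ 1/2)]
  unfold l2norm
  ring

lemma core (u₁ u₂ u₃ u₄ : ℝ → ℝ)
    (h₁ : Measurable u₁) (h₂ : Measurable u₂) (h₃ : Measurable u₃) (h₄ : Measurable u₄)
    (n₁ : ∀ x, 0 ≤ u₁ x) (n₂ : ∀ x, 0 ≤ u₂ x) (n₃ : ∀ x, 0 ≤ u₃ x) (n₄ : ∀ x, 0 ≤ u₄ x)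
    (E F : Set ℝ) (hE : MeasurableSet E) (hF : MeasurableSet F)
    (M N : Matrix (Fin 3) (Fin 3) ℝ) (hM : M.det ≠ 0) (hN : N.det ≠ 0) :
    ∫⁻ ξ : Fin 3 → ℝ,
        (ENNReal.ofReal (u₁ (row3 M 0 ξ)) * ENNReal.ofReal (u₂ (row3 M 1 ξ)) *
          E.indicator (fun _ => (1 : ℝ≥0∞)) (row3 M 2 ξ)) *
        (ENNReal.ofReal (u₃ (row3 N 0 ξ)) * ENNReal.ofReal (u₄ (row3 N 1 ξ)) *
          F.indicator (fun _ => (1 : ℝ≥0∞)) (row3 N 2 ξ))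
      ≤ (ENNReal.ofReal |M.det|⁻¹) ^ ((1:ℝ)/2) * (ENNReal.ofReal |N.det|⁻¹) ^ ((1:ℝ)/2) *
          (volume E) ^ ((1:ℝ)/2) * (volume F) ^ ((1:ℝ)/2) *
          (l2norm u₁ * l2norm u₂ * l2norm u₃ * l2norm u₄) := by
  refine le_trans (myCS _ _ (Fmeas u₁ u₂ h₁ h₂ E hE M) (Fmeas u₃ u₄ h₃ h₄ F hF N)) ?_
  rw [sq_factor u₁ u₂ h₁ h₂ n₁ n₂ E hE M hM, sq_factor u₃ u₄ h₃ h₄ n₃ n₄ F hF N hN]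
  apply le_of_eq
  ring




lemma altSum_apply (v : Fin 4 → ℝ) : altSum v = v 0 - v 1 + v 2 - v 3 := by
  simp [altSum]

lemma key_eval (L : (Fin 4 → ℝ) →ₗ[ℝ] ℝ) (x y z : ℝ) :
    L ![x, y, z, x - y + z]
      = L ![1,0,0,1] * x + L ![0,1,0,-1] * y + L ![0,0,1,1] * z := by
  have hv : (![x, y, z, x - y + z] : Fin 4 → ℝ)
      = x • ![(1:ℝ),0,0,1] + y • ![(0:ℝ),1,0,-1] + z • ![(0:ℝ),0,1,1] := by
    funext i; fin_cases i <;> simp <;> ring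
  rw [hv, map_add, map_add, LinearMap.map_smul, LinearMap.map_smul, LinearMap.map_smul,
    smul_eq_mul, smul_eq_mul, smul_eq_mul]
  ring

lemma eval_expand (L : (Fin 4 → ℝ) →ₗ[ℝ] ℝ) (v : Fin 4 → ℝ) :
    L v = v 0 * L (Pi.single 0 1) + v 1 * L (Pi.single 1 1) + v 2 * L (Pi.single 2 1)
      + v 3 * L (Pi.single 3 1) := by
  have hv : v = v 0 • (Pi.single 0 1 : Fin 4 → ℝ) + v 1 • (Pi.single 1 1 : Fin 4 → ℝ)
      + v 2 • (Pi.single 2 1 : Fin 4 → ℝ) + v 3 • (Pi.single 3 1 : Fin 4 → ℝ) := by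
    funext i; fin_cases i <;> simp [Pi.single_apply]
  conv_lhs => rw [hv]
  simp only [map_add, LinearMap.map_smul, smul_eq_mul]

lemma indep_coeffs (L₁ L₂ : (Fin 4 → ℝ) →ₗ[ℝ] ℝ)
    (hind : LinearIndependent ℝ ![altSum, L₁, L₂]) :
    ∀ c₁ c₂ : ℝ,
      c₁ * L₁ ![1,0,0,1] + c₂ * L₂ ![1,0,0,1] = 0 →
      c₁ * L₁ ![0,1,0,-1] + c₂ * L₂ ![0,1,0,-1] = 0 →
      c₁ * L₁ ![0,0,1,1] + c₂ * L₂ ![0,0,1,1] = 0 → c₁ = 0 ∧ c₂ = 0 := by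
  intro c₁ c₂ hp hq hr
  rw [eval_expand L₁, eval_expand L₂] at hp hq hr
  simp only [Matrix.cons_val_zero, Matrix.cons_val_one, Matrix.head_cons,
    Matrix.cons_val_two, Matrix.tail_cons, Matrix.cons_val_three] at hp hq hr
  set t : ℝ := -(c₁ * L₁ (Pi.single 3 1) + c₂ * L₂ (Pi.single 3 1)) with ht
  have hzero : (t • altSum + (-c₁) • L₁ + (-c₂) • L₂) = 0 := by
    apply LinearMap.ext; intro v
    simp only [LinearMap.add_apply, LinearMap.smul_apply, smul_eq_mul, LinearMap.zero_apply]
    rw [altSum_apply, eval_expand L₁ v, eval_expand L₂ v, ht]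
    linear_combination (-(v 0)) * hp + (-(v 1)) * hq + (-(v 2)) * hr
  have hli := Fintype.linearIndependent_iff.mp hind ![t, -c₁, -c₂] ?_
  · constructor
    · have := hli 1; simpa using this
    · have := hli 2; simpa using this
  · rw [Fin.sum_univ_three]
    simp
    rw [← neg_smul, ← neg_smul]
    exact hzero



lemma six_cases (p₁ q₁ r₁ p₂ q₂ r₂ : ℝ)
    (hw : ∀ c₁ c₂ : ℝ, c₁ * p₁ + c₂ * p₂ = 0 → c₁ * q₁ + c₂ * q₂ = 0 →
      c₁ * r₁ + c₂ * r₂ = 0 → c₁ = 0 ∧ c₂ = 0) :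
    (q₁ ≠ 0 ∧ p₂ - r₂ ≠ 0) ∨ (q₂ ≠ 0 ∧ p₁ - r₁ ≠ 0) ∨ (r₁ ≠ 0 ∧ p₂ + q₂ ≠ 0) ∨
      (r₂ ≠ 0 ∧ p₁ + q₁ ≠ 0) ∨ (p₁ ≠ 0 ∧ q₂ + r₂ ≠ 0) ∨ (p₂ ≠ 0 ∧ q₁ + r₁ ≠ 0) := by
  by_contra hD
  push_neg at hD
  obtain ⟨h1, h2, h3, h4, h5, h6⟩ := hD
  by_cases hq₁ : q₁ = 0
  · by_cases hr₁ : r₁ = 0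
    · by_cases hp₁ : p₁ = 0
      · obtain ⟨h, -⟩ := hw 1 0 (by linarith) (by linarith) (by linarith)
        exact one_ne_zero h
      · have hr₂ : r₂ = 0 := by
          by_contra hh; have := h4 hh; exact hp₁ (by linarith)
        have hq₂ : q₂ = 0 := by
          by_contra hh; have := h2 hh; exact hp₁ (by linarith)
        obtain ⟨-, h⟩ := hw p₂ (-p₁) (by ring) (by rw [hq₁, hq₂]; ring)
          (by rw [hr₁, hr₂]; ring)
        exact hp₁ (by linarith)
    · have hp₂ : p₂ = 0 := by
        by_contra hh; have := h6 hh; exact hr₁ (by linarith)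
      have hq₂ : q₂ = 0 := by have := h3 hr₁; linarith
      by_cases hr₂ : r₂ = 0
      · obtain ⟨-, h⟩ := hw 0 1 (by rw [hp₂]; ring) (by rw [hq₂]; ring) (by rw [hr₂]; ring)
        exact one_ne_zero h
      · have hp₁ : p₁ = 0 := by have := h4 hr₂; linarith
        obtain ⟨-, h⟩ := hw r₂ (-r₁) (by rw [hp₁, hp₂]; ring) (by rw [hq₁, hq₂]; ring)
          (by ring)
        exact hr₁ (by linarith)
  · have hpr₂ : p₂ - r₂ = 0 := h1 hq₁
    by_cases hp₂ : p₂ = 0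
    · have hr₂ : r₂ = 0 := by linarith
      by_cases hq₂ : q₂ = 0
      · obtain ⟨-, h⟩ := hw 0 1 (by rw [hp₂]; ring) (by rw [hq₂]; ring) (by rw [hr₂]; ring)
        exact one_ne_zero h
      · have hpr₁ : p₁ - r₁ = 0 := h2 hq₂
        have hp₁ : p₁ = 0 := by
          by_contra hh; have := h5 hh; exact hq₂ (by linarith)
        have hr₁ : r₁ = 0 := by linarith
        obtain ⟨-, h⟩ := hw q₂ (-q₁) (by rw [hp₁, hp₂]; ring) (by ring)
          (by rw [hr₁, hr₂]; ring)
        exact hq₁ (by linarith)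
    · have hr₁' : q₁ + r₁ = 0 := h6 hp₂
      have hp₁' : p₁ + q₁ = 0 := h4 (by intro hh; exact hp₂ (by linarith))
      have hq₂' : p₂ + q₂ = 0 := h3 (by intro hh; exact hq₁ (by linarith))
      obtain ⟨-, h⟩ := hw p₂ q₁ (by linear_combination p₂ * hp₁' - q₁ * hpr₂ + q₁ * hq₂'
          - q₁ * hq₂' + q₁ * hpr₂ - p₂ * hp₁' + p₂ * hp₁')
        (by linear_combination q₁ * hq₂' + p₂ * hp₁' - p₂ * hp₁')
        (by linear_combination p₂ * hr₁' + q₁ * hpr₂ - q₁ * hpr₂ + q₁ * (-hpr₂))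
      exact hq₁ h

lemma case_glue (g : Fin 4 → ℝ → ℝ) (hgm : ∀ n, Measurable (g n)) (hg0 : ∀ n x, 0 ≤ g n x)
    (E₁ E₂ : Set ℝ) (L₁ L₂ : (Fin 4 → ℝ) →ₗ[ℝ] ℝ)
    (M N : Matrix (Fin 3) (Fin 3) ℝ) (hM : M.det ≠ 0) (hN : N.det ≠ 0)
    (a b c d : Fin 4) (E F : Set ℝ) (hE : MeasurableSet E) (hF : MeasurableSet F)
    (hpt : ∀ ξ : Fin 3 → ℝ,
      ENNReal.ofReal (∏ n : Fin 4, g n (![ξ 0, ξ 1, ξ 2, ξ 0 - ξ 1 + ξ 2] n)) *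
        Set.indicator E₁ (fun _ => (1:ℝ≥0∞)) (L₁ ![ξ 0, ξ 1, ξ 2, ξ 0 - ξ 1 + ξ 2]) *
        Set.indicator E₂ (fun _ => (1:ℝ≥0∞)) (L₂ ![ξ 0, ξ 1, ξ 2, ξ 0 - ξ 1 + ξ 2])
      = (ENNReal.ofReal (g a (row3 M 0 ξ)) * ENNReal.ofReal (g b (row3 M 1 ξ)) *
          E.indicator (fun _ => (1:ℝ≥0∞)) (row3 M 2 ξ)) *
        (ENNReal.ofReal (g c (row3 N 0 ξ)) * ENNReal.ofReal (g d (row3 N 1 ξ)) *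
          F.indicator (fun _ => (1:ℝ≥0∞)) (row3 N 2 ξ)))
    (hl2 : l2norm (g a) * l2norm (g b) * l2norm (g c) * l2norm (g d)
        = ∏ n : Fin 4, l2norm (g n))
    (hvol : (volume E) ^ ((1:ℝ)/2) * (volume F) ^ ((1:ℝ)/2)
        = (volume E₁) ^ ((1:ℝ)/2) * (volume E₂) ^ ((1:ℝ)/2)) :
    (∫⁻ ξ₁ : ℝ, ∫⁻ ξ₂ : ℝ, ∫⁻ ξ₃ : ℝ,
        ENNReal.ofReal (∏ n : Fin 4, g n (![ξ₁, ξ₂, ξ₃, ξ₁ - ξ₂ + ξ₃] n)) *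
          Set.indicator E₁ (fun _ => (1 : ℝ≥0∞)) (L₁ ![ξ₁, ξ₂, ξ₃, ξ₁ - ξ₂ + ξ₃]) *
          Set.indicator E₂ (fun _ => (1 : ℝ≥0∞)) (L₂ ![ξ₁, ξ₂, ξ₃, ξ₁ - ξ₂ + ξ₃]))
      ≤ (ENNReal.ofReal |M.det|⁻¹) ^ ((1:ℝ)/2) * (ENNReal.ofReal |N.det|⁻¹) ^ ((1:ℝ)/2) *
          (volume E₁) ^ ((1:ℝ)/2) * (volume E₂) ^ ((1:ℝ)/2) *
          ∏ n : Fin 4, l2norm (g n) := by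
  set Ψ : (Fin 3 → ℝ) → ℝ≥0∞ := fun ξ =>
    ENNReal.ofReal (∏ n : Fin 4, g n (![ξ 0, ξ 1, ξ 2, ξ 0 - ξ 1 + ξ 2] n)) *
      Set.indicator E₁ (fun _ => (1:ℝ≥0∞)) (L₁ ![ξ 0, ξ 1, ξ 2, ξ 0 - ξ 1 + ξ 2]) *
      Set.indicator E₂ (fun _ => (1:ℝ≥0∞)) (L₂ ![ξ 0, ξ 1, ξ 2, ξ 0 - ξ 1 + ξ 2]) with hΨdef
  have hΨeq : Ψ = fun ξ =>
      (ENNReal.ofReal (g a (row3 M 0 ξ)) * ENNReal.ofReal (g b (row3 M 1 ξ)) *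
        E.indicator (fun _ => (1:ℝ≥0∞)) (row3 M 2 ξ)) *
      (ENNReal.ofReal (g c (row3 N 0 ξ)) * ENNReal.ofReal (g d (row3 N 1 ξ)) *
        F.indicator (fun _ => (1:ℝ≥0∞)) (row3 N 2 ξ)) := funext hpt
  have hΨm : Measurable Ψ := by
    rw [hΨeq]
    exact (Fmeas (g a) (g b) (hgm a) (hgm b) E hE M).mul
      (Fmeas (g c) (g d) (hgm c) (hgm d) F hF N)
  have conv1 : ∫⁻ ξ : Fin 3 → ℝ, Ψ ξ
      = ∫⁻ ξ₁ : ℝ, ∫⁻ ξ₂ : ℝ, ∫⁻ ξ₃ : ℝ,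
          ENNReal.ofReal (∏ n : Fin 4, g n (![ξ₁, ξ₂, ξ₃, ξ₁ - ξ₂ + ξ₃] n)) *
            Set.indicator E₁ (fun _ => (1 : ℝ≥0∞)) (L₁ ![ξ₁, ξ₂, ξ₃, ξ₁ - ξ₂ + ξ₃]) *
            Set.indicator E₂ (fun _ => (1 : ℝ≥0∞)) (L₂ ![ξ₁, ξ₂, ξ₃, ξ₁ - ξ₂ + ξ₃]) := by
    rw [lintegral_triple Ψ hΨm]
    simp only [hΨdef, Matrix.cons_val_zero, Matrix.cons_val_one, Matrix.head_cons,
      Matrix.cons_val_two, Matrix.tail_cons]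
  rw [← conv1, hΨeq]
  refine le_trans (core (g a) (g b) (g c) (g d) (hgm a) (hgm b) (hgm c) (hgm d)
    (hg0 a) (hg0 b) (hg0 c) (hg0 d) E F hE hF M N hM hN) (le_of_eq ?_)
  rw [← hl2]
  set A := (ENNReal.ofReal |M.det|⁻¹) ^ ((1:ℝ)/2)
  set B := (ENNReal.ofReal |N.det|⁻¹) ^ ((1:ℝ)/2)
  set X := l2norm (g a) * l2norm (g b) * l2norm (g c) * l2norm (g d)
  have h1 : A * B * (volume E) ^ ((1:ℝ)/2) * (volume F) ^ ((1:ℝ)/2) * X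
      = ((volume E) ^ ((1:ℝ)/2) * (volume F) ^ ((1:ℝ)/2)) * (A * B * X) := by ring
  rw [h1, hvol]
  ring

/-- Bilinear indicator estimate on the hyperplane `Ξ = {ξ₁ - ξ₂ + ξ₃ - ξ₄ = 0}`
(Lemma 4.5 of Christ–Colliander–Tao): if `ξ ↦ ξ₁-ξ₂+ξ₃-ξ₄`, `L₁`, `L₂` are linearly
independent functionals on `ℝ⁴` then, with `dλ` the Lebesgue measure on `Ξ` in the
parametrization `ξ₄ = ξ₁ - ξ₂ + ξ₃`,
`∫_Ξ ∏ₙ gₙ(ξₙ) 1_{E₁}(L₁ ξ) 1_{E₂}(L₂ ξ) dλ(ξ) ≤ C |E₁|^{1/2} |E₂|^{1/2} ∏ₙ ‖gₙ‖₂`. -/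
theorem routine_bilinear_estimate (L₁ L₂ : (Fin 4 → ℝ) →ₗ[ℝ] ℝ)
    (hind : LinearIndependent ℝ ![altSum, L₁, L₂]) :
    ∃ C : ℝ≥0∞, C ≠ ⊤ ∧
      ∀ (g : Fin 4 → ℝ → ℝ),
        (∀ n, Measurable (g n)) → (∀ n x, 0 ≤ g n x) →
        ∀ (E₁ E₂ : Set ℝ), MeasurableSet E₁ → MeasurableSet E₂ →
        (∫⁻ ξ₁ : ℝ, ∫⁻ ξ₂ : ℝ, ∫⁻ ξ₃ : ℝ,
            ENNReal.ofReal (∏ n : Fin 4, g n (![ξ₁, ξ₂, ξ₃, ξ₁ - ξ₂ + ξ₃] n)) *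
              Set.indicator E₁ (fun _ => (1 : ℝ≥0∞)) (L₁ ![ξ₁, ξ₂, ξ₃, ξ₁ - ξ₂ + ξ₃]) *
              Set.indicator E₂ (fun _ => (1 : ℝ≥0∞)) (L₂ ![ξ₁, ξ₂, ξ₃, ξ₁ - ξ₂ + ξ₃]))
          ≤ C * (volume E₁) ^ ((1 : ℝ) / 2) * (volume E₂) ^ ((1 : ℝ) / 2) *
              ∏ n : Fin 4, l2norm (g n) := by
  set p₁ := L₁ ![1,0,0,1] with hp₁d
  set q₁ := L₁ ![0,1,0,-1] with hq₁d
  set r₁ := L₁ ![0,0,1,1] with hr₁d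
  set p₂ := L₂ ![1,0,0,1] with hp₂d
  set q₂ := L₂ ![0,1,0,-1] with hq₂d
  set r₂ := L₂ ![0,0,1,1] with hr₂d
  have key₁ : ∀ x y z : ℝ, L₁ ![x, y, z, x - y + z] = p₁ * x + q₁ * y + r₁ * z :=
    key_eval L₁
  have key₂ : ∀ x y z : ℝ, L₂ ![x, y, z, x - y + z] = p₂ * x + q₂ * y + r₂ * z :=
    key_eval L₂
  have hw : ∀ c₁ c₂ : ℝ, c₁ * p₁ + c₂ * p₂ = 0 → c₁ * q₁ + c₂ * q₂ = 0 →
      c₁ * r₁ + c₂ * r₂ = 0 → c₁ = 0 ∧ c₂ = 0 := indep_coeffs L₁ L₂ hind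
  have hCne : ∀ x y : ℝ,
      (ENNReal.ofReal |x|⁻¹) ^ ((1:ℝ)/2) * (ENNReal.ofReal |y|⁻¹) ^ ((1:ℝ)/2) ≠ ⊤ :=
    fun x y => ENNReal.mul_ne_top
      (ENNReal.rpow_ne_top_of_nonneg (by norm_num) ENNReal.ofReal_ne_top)
      (ENNReal.rpow_ne_top_of_nonneg (by norm_num) ENNReal.ofReal_ne_top)
  rcases six_cases p₁ q₁ r₁ p₂ q₂ r₂ hw with ⟨hA, hB⟩|⟨hA, hB⟩|⟨hA, hB⟩|⟨hA, hB⟩|⟨hA, hB⟩|⟨hA, hB⟩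
  · -- P1 : q₁ ≠ 0, p₂ - r₂ ≠ 0 ; pairing {0,2} with E₁, {1,3} with E₂
    set M : Matrix (Fin 3) (Fin 3) ℝ := !![1,0,0; 0,0,1; p₁,q₁,r₁] with hMdef
    set N : Matrix (Fin 3) (Fin 3) ℝ := !![0,1,0; 1,-1,1; p₂,q₂,r₂] with hNdef
    have hM : M.det ≠ 0 := by
      have : M.det = -q₁ := by simp [hMdef, Matrix.det_fin_three]
      rw [this]; exact neg_ne_zero.mpr hA
    have hN : N.det ≠ 0 := by
      have : N.det = p₂ - r₂ := by simp [hNdef, Matrix.det_fin_three]; ring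
      rw [this]; exact hB
    refine ⟨(ENNReal.ofReal |M.det|⁻¹) ^ ((1:ℝ)/2) * (ENNReal.ofReal |N.det|⁻¹) ^ ((1:ℝ)/2),
      hCne _ _, ?_⟩
    intro g hgm hg0 E₁ E₂ hE₁ hE₂
    refine le_trans (case_glue g hgm hg0 E₁ E₂ L₁ L₂ M N hM hN 0 2 1 3 E₁ E₂ hE₁ hE₂
      ?_ ?_ rfl) (le_of_eq (by ring))
    · intro ξ
      rw [Fin.prod_univ_four]
      simp only [Matrix.cons_val_zero, Matrix.cons_val_one, Matrix.head_cons,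
        Matrix.cons_val_two, Matrix.tail_cons, Matrix.cons_val_three]
      rw [key₁, key₂,
        ENNReal.ofReal_mul (mul_nonneg (mul_nonneg (hg0 0 _) (hg0 1 _)) (hg0 2 _)),
        ENNReal.ofReal_mul (mul_nonneg (hg0 0 _) (hg0 1 _)),
        ENNReal.ofReal_mul (hg0 0 _)]
      simp only [row3, hMdef, hNdef, Matrix.cons_val_zero, Matrix.cons_val_one,
        Matrix.head_cons, Matrix.cons_val_two, Matrix.tail_cons, Matrix.of_apply,
        Matrix.cons_val', Matrix.empty_val', Matrix.cons_val_fin_one, Matrix.head_fin_const]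
      ring_nf
    · rw [Fin.prod_univ_four]; try ring
  · -- P2
    set M : Matrix (Fin 3) (Fin 3) ℝ := !![1,0,0; 0,0,1; p₂,q₂,r₂] with hMdef
    set N : Matrix (Fin 3) (Fin 3) ℝ := !![0,1,0; 1,-1,1; p₁,q₁,r₁] with hNdef
    have hM : M.det ≠ 0 := by
      have hdet : M.det = -q₂ := by simp [hMdef, Matrix.det_fin_three]
      rw [hdet]; exact neg_ne_zero.mpr hA
    have hN : N.det ≠ 0 := by
      have hdet : N.det = p₁ - r₁ := by simp [hNdef, Matrix.det_fin_three]; try ring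
      rw [hdet]; exact hB
    refine ⟨(ENNReal.ofReal |M.det|⁻¹) ^ ((1:ℝ)/2) * (ENNReal.ofReal |N.det|⁻¹) ^ ((1:ℝ)/2),
      hCne _ _, ?_⟩
    intro g hgm hg0 E₁ E₂ hE₁ hE₂
    refine le_trans (case_glue g hgm hg0 E₁ E₂ L₁ L₂ M N hM hN 0 2 1 3 E₂ E₁ hE₂ hE₁
      ?_ ?_ (mul_comm _ _)) (le_of_eq (by ring))
    · intro ξ
      rw [Fin.prod_univ_four]
      simp only [Matrix.cons_val_zero, Matrix.cons_val_one, Matrix.head_cons,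
        Matrix.cons_val_two, Matrix.tail_cons, Matrix.cons_val_three]
      rw [key₁, key₂,
        ENNReal.ofReal_mul (mul_nonneg (mul_nonneg (hg0 0 _) (hg0 1 _)) (hg0 2 _)),
        ENNReal.ofReal_mul (mul_nonneg (hg0 0 _) (hg0 1 _)),
        ENNReal.ofReal_mul (hg0 0 _)]
      simp only [row3, hMdef, hNdef, Matrix.cons_val_zero, Matrix.cons_val_one,
        Matrix.head_cons, Matrix.cons_val_two, Matrix.tail_cons, Matrix.of_apply,
        Matrix.cons_val', Matrix.empty_val', Matrix.cons_val_fin_one, Matrix.head_fin_const]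
      ring_nf
    · rw [Fin.prod_univ_four]; try ring
  · -- P3
    set M : Matrix (Fin 3) (Fin 3) ℝ := !![1,0,0; 0,1,0; p₁,q₁,r₁] with hMdef
    set N : Matrix (Fin 3) (Fin 3) ℝ := !![0,0,1; 1,-1,1; p₂,q₂,r₂] with hNdef
    have hM : M.det ≠ 0 := by
      have hdet : M.det = r₁ := by simp [hMdef, Matrix.det_fin_three]
      rw [hdet]; exact hA
    have hN : N.det ≠ 0 := by
      have hdet : N.det = p₂ + q₂ := by simp [hNdef, Matrix.det_fin_three]; try ring
      rw [hdet]; exact hB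
    refine ⟨(ENNReal.ofReal |M.det|⁻¹) ^ ((1:ℝ)/2) * (ENNReal.ofReal |N.det|⁻¹) ^ ((1:ℝ)/2),
      hCne _ _, ?_⟩
    intro g hgm hg0 E₁ E₂ hE₁ hE₂
    refine le_trans (case_glue g hgm hg0 E₁ E₂ L₁ L₂ M N hM hN 0 1 2 3 E₁ E₂ hE₁ hE₂
      ?_ ?_ rfl) (le_of_eq (by ring))
    · intro ξ
      rw [Fin.prod_univ_four]
      simp only [Matrix.cons_val_zero, Matrix.cons_val_one, Matrix.head_cons,
        Matrix.cons_val_two, Matrix.tail_cons, Matrix.cons_val_three]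
      rw [key₁, key₂,
        ENNReal.ofReal_mul (mul_nonneg (mul_nonneg (hg0 0 _) (hg0 1 _)) (hg0 2 _)),
        ENNReal.ofReal_mul (mul_nonneg (hg0 0 _) (hg0 1 _)),
        ENNReal.ofReal_mul (hg0 0 _)]
      simp only [row3, hMdef, hNdef, Matrix.cons_val_zero, Matrix.cons_val_one,
        Matrix.head_cons, Matrix.cons_val_two, Matrix.tail_cons, Matrix.of_apply,
        Matrix.cons_val', Matrix.empty_val', Matrix.cons_val_fin_one, Matrix.head_fin_const]
      ring_nf
    · rw [Fin.prod_univ_four]; try ring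
  · -- P4
    set M : Matrix (Fin 3) (Fin 3) ℝ := !![1,0,0; 0,1,0; p₂,q₂,r₂] with hMdef
    set N : Matrix (Fin 3) (Fin 3) ℝ := !![0,0,1; 1,-1,1; p₁,q₁,r₁] with hNdef
    have hM : M.det ≠ 0 := by
      have hdet : M.det = r₂ := by simp [hMdef, Matrix.det_fin_three]
      rw [hdet]; exact hA
    have hN : N.det ≠ 0 := by
      have hdet : N.det = p₁ + q₁ := by simp [hNdef, Matrix.det_fin_three]; try ring
      rw [hdet]; exact hB
    refine ⟨(ENNReal.ofReal |M.det|⁻¹) ^ ((1:ℝ)/2) * (ENNReal.ofReal |N.det|⁻¹) ^ ((1:ℝ)/2),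
      hCne _ _, ?_⟩
    intro g hgm hg0 E₁ E₂ hE₁ hE₂
    refine le_trans (case_glue g hgm hg0 E₁ E₂ L₁ L₂ M N hM hN 0 1 2 3 E₂ E₁ hE₂ hE₁
      ?_ ?_ (mul_comm _ _)) (le_of_eq (by ring))
    · intro ξ
      rw [Fin.prod_univ_four]
      simp only [Matrix.cons_val_zero, Matrix.cons_val_one, Matrix.head_cons,
        Matrix.cons_val_two, Matrix.tail_cons, Matrix.cons_val_three]
      rw [key₁, key₂,
        ENNReal.ofReal_mul (mul_nonneg (mul_nonneg (hg0 0 _) (hg0 1 _)) (hg0 2 _)),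
        ENNReal.ofReal_mul (mul_nonneg (hg0 0 _) (hg0 1 _)),
        ENNReal.ofReal_mul (hg0 0 _)]
      simp only [row3, hMdef, hNdef, Matrix.cons_val_zero, Matrix.cons_val_one,
        Matrix.head_cons, Matrix.cons_val_two, Matrix.tail_cons, Matrix.of_apply,
        Matrix.cons_val', Matrix.empty_val', Matrix.cons_val_fin_one, Matrix.head_fin_const]
      ring_nf
    · rw [Fin.prod_univ_four]; try ring
  · -- P5
    set M : Matrix (Fin 3) (Fin 3) ℝ := !![0,1,0; 0,0,1; p₁,q₁,r₁] with hMdef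
    set N : Matrix (Fin 3) (Fin 3) ℝ := !![1,0,0; 1,-1,1; p₂,q₂,r₂] with hNdef
    have hM : M.det ≠ 0 := by
      have hdet : M.det = p₁ := by simp [hMdef, Matrix.det_fin_three]
      rw [hdet]; exact hA
    have hN : N.det ≠ 0 := by
      have hdet : N.det = -(q₂ + r₂) := by simp [hNdef, Matrix.det_fin_three]; try ring
      rw [hdet]; exact neg_ne_zero.mpr hB
    refine ⟨(ENNReal.ofReal |M.det|⁻¹) ^ ((1:ℝ)/2) * (ENNReal.ofReal |N.det|⁻¹) ^ ((1:ℝ)/2),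
      hCne _ _, ?_⟩
    intro g hgm hg0 E₁ E₂ hE₁ hE₂
    refine le_trans (case_glue g hgm hg0 E₁ E₂ L₁ L₂ M N hM hN 1 2 0 3 E₁ E₂ hE₁ hE₂
      ?_ ?_ rfl) (le_of_eq (by ring))
    · intro ξ
      rw [Fin.prod_univ_four]
      simp only [Matrix.cons_val_zero, Matrix.cons_val_one, Matrix.head_cons,
        Matrix.cons_val_two, Matrix.tail_cons, Matrix.cons_val_three]
      rw [key₁, key₂,
        ENNReal.ofReal_mul (mul_nonneg (mul_nonneg (hg0 0 _) (hg0 1 _)) (hg0 2 _)),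
        ENNReal.ofReal_mul (mul_nonneg (hg0 0 _) (hg0 1 _)),
        ENNReal.ofReal_mul (hg0 0 _)]
      simp only [row3, hMdef, hNdef, Matrix.cons_val_zero, Matrix.cons_val_one,
        Matrix.head_cons, Matrix.cons_val_two, Matrix.tail_cons, Matrix.of_apply,
        Matrix.cons_val', Matrix.empty_val', Matrix.cons_val_fin_one, Matrix.head_fin_const]
      ring_nf
    · rw [Fin.prod_univ_four]; try ring
  · -- P6
    set M : Matrix (Fin 3) (Fin 3) ℝ := !![0,1,0; 0,0,1; p₂,q₂,r₂] with hMdef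
    set N : Matrix (Fin 3) (Fin 3) ℝ := !![1,0,0; 1,-1,1; p₁,q₁,r₁] with hNdef
    have hM : M.det ≠ 0 := by
      have hdet : M.det = p₂ := by simp [hMdef, Matrix.det_fin_three]
      rw [hdet]; exact hA
    have hN : N.det ≠ 0 := by
      have hdet : N.det = -(q₁ + r₁) := by simp [hNdef, Matrix.det_fin_three]; try ring
      rw [hdet]; exact neg_ne_zero.mpr hB
    refine ⟨(ENNReal.ofReal |M.det|⁻¹) ^ ((1:ℝ)/2) * (ENNReal.ofReal |N.det|⁻¹) ^ ((1:ℝ)/2),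
      hCne _ _, ?_⟩
    intro g hgm hg0 E₁ E₂ hE₁ hE₂
    refine le_trans (case_glue g hgm hg0 E₁ E₂ L₁ L₂ M N hM hN 1 2 0 3 E₂ E₁ hE₂ hE₁
      ?_ ?_ (mul_comm _ _)) (le_of_eq (by ring))
    · intro ξ
      rw [Fin.prod_univ_four]
      simp only [Matrix.cons_val_zero, Matrix.cons_val_one, Matrix.head_cons,
        Matrix.cons_val_two, Matrix.tail_cons, Matrix.cons_val_three]
      rw [key₁, key₂,
        ENNReal.ofReal_mul (mul_nonneg (mul_nonneg (hg0 0 _) (hg0 1 _)) (hg0 2 _)),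
        ENNReal.ofReal_mul (mul_nonneg (hg0 0 _) (hg0 1 _)),
        ENNReal.ofReal_mul (hg0 0 _)]
      simp only [row3, hMdef, hNdef, Matrix.cons_val_zero, Matrix.cons_val_one,
        Matrix.head_cons, Matrix.cons_val_two, Matrix.tail_cons, Matrix.of_apply,
        Matrix.cons_val', Matrix.empty_val', Matrix.cons_val_fin_one, Matrix.head_fin_const]
      ring_nf
    · rw [Fin.prod_univ_four]; try ring

end
end
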